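/- arXiv:1606.02011 — 2 statements merged into one kernel-verified Lean document; each statement's English description precedes it below -/
import Mathlib

section
/- Suppose f₀(x ∣ θ) = h((θ̂(x) − θ)ᵀΣ⁻¹(θ̂(x) − θ))·u(x) where h : [0,∞) → [0,∞) is decreasing and Σ is positive definite, and u(x) ≥ 0. If t̂ is the projection of t onto a closed convex set C containing θ̂(x) (with respect to the Σ⁻¹ inner product), then f₀(x ∣ t̂) ≥ f₀(x ∣ t). -/
/-!
The projection `t̂` makes an obtuse angle, in the `Σ⁻¹` inner product, between `t - t̂` and
`θ̂(x) - t̂`. Expanding the quadratic form of `θ̂(x) - t = (θ̂(x) - t̂) - (t - t̂)`, the cross term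
and the square of `t - t̂` are both nonnegative, so `θ̂(x)` is at least as close to `t̂` as to `t`
in the Mahalanobis distance; then use that `h` is antitone and `u(x) ≥ 0`.
-/

namespace Matrix

variable {n R : Type*} [Fintype n]

theorem IsSymm.dotProduct_mulVec_comm [CommSemiring R] {A : Matrix n n R} (hA : A.IsSymm)
    (v w : n → R) : v ⬝ᵥ A *ᵥ w = w ⬝ᵥ A *ᵥ v := by
  rw [dotProduct_mulVec, ← mulVec_transpose, hA.eq, dotProduct_comm]

theorem IsSymm.dotProduct_mulVec_sub_self [CommRing R] {A : Matrix n n R} (hA : A.IsSymm)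
    (v w : n → R) :
    (v - w) ⬝ᵥ A *ᵥ (v - w) = v ⬝ᵥ A *ᵥ v - 2 * (w ⬝ᵥ A *ᵥ v) + w ⬝ᵥ A *ᵥ w := by
  simp only [mulVec_sub, sub_dotProduct, dotProduct_sub, hA.dotProduct_mulVec_comm v w]
  ring

variable [CommRing R] [PartialOrder R] [StarRing R] [TrivialStar R]

theorem PosSemidef.dotProduct_mulVec_self_nonneg {A : Matrix n n R} (hA : A.PosSemidef)
    (v : n → R) : 0 ≤ v ⬝ᵥ A *ᵥ v := by
  simpa using hA.dotProduct_mulVec_nonneg v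

theorem PosSemidef.dotProduct_mulVec_self_le_sub [IsOrderedRing R] {A : Matrix n n R}
    (hA : A.PosSemidef) {v w : n → R} (hvw : w ⬝ᵥ A *ᵥ v ≤ 0) :
    v ⬝ᵥ A *ᵥ v ≤ (v - w) ⬝ᵥ A *ᵥ (v - w) := by
  rw [(isHermitian_iff_isSymm.mp hA.isHermitian).dotProduct_mulVec_sub_self]
  have hcross : 2 * (w ⬝ᵥ A *ᵥ v) ≤ 0 := mul_nonpos_of_nonneg_of_nonpos zero_le_two hvw
  exact (le_sub_self_iff _ |>.mpr hcross).trans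
    (le_add_of_nonneg_right (hA.dotProduct_mulVec_self_nonneg w))

end Matrix

open Matrix

theorem stmt1_general (d : ℕ) (S : Matrix (Fin d) (Fin d) ℝ) (hS : S.PosDef)
    (h : ℝ → ℝ) (hanti : AntitoneOn h (Set.Ici 0))
    (ux : ℝ) (hux : 0 ≤ ux)
    (θhatx : Fin d → ℝ)
    (f : (Fin d → ℝ) → ℝ)
    (hf : ∀ θ, f θ = h (dotProduct (θhatx - θ) ((S⁻¹).mulVec (θhatx - θ))) * ux)
    (C : Set (Fin d → ℝ))
    (hθC : θhatx ∈ C)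
    (t that : Fin d → ℝ)
    (hproj : ∀ x ∈ C, dotProduct (t - that) ((S⁻¹).mulVec (x - that)) ≤ 0) :
    f t ≤ f that := by
  have hSinv := hS.inv.posSemidef
  have hcloser : (θhatx - that) ⬝ᵥ S⁻¹ *ᵥ (θhatx - that) ≤
      (θhatx - t) ⬝ᵥ S⁻¹ *ᵥ (θhatx - t) := by
    simpa using hSinv.dotProduct_mulVec_self_le_sub (hproj θhatx hθC)
  rw [hf, hf]
  exact mul_le_mul_of_nonneg_right
    (hanti (hSinv.dotProduct_mulVec_self_nonneg _) (hSinv.dotProduct_mulVec_self_nonneg _) hcloser)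
    hux

/-- Suppose f₀(x ∣ θ) = h((θ̂(x) − θ)ᵀΣ⁻¹(θ̂(x) − θ))·u(x), with
h : [0,∞) → [0,∞) decreasing, Σ positive definite and u(x) ≥ 0.  If t̂ is the projection
of t onto a closed convex set C containing θ̂(x) (w.r.t. the Σ⁻¹ inner product, i.e.
⟨t − t̂, x − t̂⟩_{Σ⁻¹} ≤ 0 for all x ∈ C), then f₀(x ∣ t̂) ≥ f₀(x ∣ t). -/
theorem stmt1 (d : ℕ) (S : Matrix (Fin d) (Fin d) ℝ) (hS : S.PosDef)
    (h : ℝ → ℝ) (hanti : AntitoneOn h (Set.Ici 0)) (hnn : ∀ z ∈ Set.Ici (0 : ℝ), 0 ≤ h z)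
    (ux : ℝ) (hux : 0 ≤ ux)
    (θhatx : Fin d → ℝ)
    (f : (Fin d → ℝ) → ℝ)
    (hf : ∀ θ, f θ = h (dotProduct (θhatx - θ) ((S⁻¹).mulVec (θhatx - θ))) * ux)
    (C : Set (Fin d → ℝ)) (hCclosed : IsClosed C) (hCconv : Convex ℝ C)
    (hθC : θhatx ∈ C)
    (t that : Fin d → ℝ) (hthatC : that ∈ C)
    (hproj : ∀ x ∈ C, dotProduct (t - that) ((S⁻¹).mulVec (x - that)) ≤ 0) :
    f t ≤ f that :=
  stmt1_general d S hS h hanti ux hux θhatx f hf C hθC t that hproj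
end

section
/- Suppose for each j = 1,…,p the density satisfies f₀(X_j ∣ θ) = h_j((θ̂_j − θ)ᵀΣ⁻¹(θ̂_j − θ))·u_j with h_j : [0,∞) → [0,∞) antitone, Σ positive definite, and u_j ≥ 0, and set 𝒯₀ = conv(θ̂₁,…,θ̂_p). Then for any finitely supported probability measure G on ℝ^d there exists a finitely supported probability measure G̃ on 𝒯₀ with ℓ(G̃) ≤ ℓ(G), where ℓ(G) = −(1/p) Σ_j log ∫ f₀(X_j ∣ θ) dG(θ). Consequently inf over all finitely supported probability measures of ℓ equals the inf over finitely supported measures on 𝒯₀. -/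
/-!
Projecting an atom `t` onto `𝒯₀ = conv(θ̂₁, …, θ̂_p)` in the inner product given by `Σ⁻¹`
brings it closer to every `θ̂_j`: the projection `v` satisfies `⟪θ̂_j - v, t - v⟫ ≤ 0`, hence
`‖θ̂_j - t‖² ≥ ‖θ̂_j - v‖² + ‖t - v‖²`. Since each `h_j` is antitone and `u_j ≥ 0`, no
likelihood `f₀(X_j ∣ ·)` decreases, so no mixture likelihood decreases and `ℓ` cannot increase.
The two infima then agree because every value of `ℓ` is bounded below by one attained on `𝒯₀`.
-/

/-- Values of ℓ(G) over finitely supported probability measures with atoms in S and all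
per-observation mixture likelihoods strictly positive (so that ℓ(G) is finite). -/
def npmleValsPos (d p : ℕ) (f : Fin p → (Fin d → ℝ) → ℝ) (S : Set (Fin d → ℝ)) : Set ℝ :=
  {r | ∃ (m : ℕ) (w : Fin m → ℝ) (t : Fin m → (Fin d → ℝ)),
        (∀ k, 0 ≤ w k) ∧ (∑ k, w k) = 1 ∧ (∀ k, t k ∈ S) ∧
        (∀ j, 0 < ∑ k, w k * f j (t k)) ∧
        r = -(1 / (p : ℝ)) * ∑ j, Real.log (∑ k, w k * f j (t k))}

open Set Matrix

theorem csInf_eq_of_subset_of_forall_exists_le {α : Type*} [ConditionallyCompleteLinearOrder α]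
    {A B : Set α} (hBA : B ⊆ A) (hdom : ∀ a ∈ A, ∃ b ∈ B, b ≤ a) : sInf A = sInf B := by
  rcases A.eq_empty_or_nonempty with rfl | hA
  · rw [subset_empty_iff.mp hBA]
  by_cases hB : BddBelow B
  · have hAbdd : BddBelow A := by
      obtain ⟨m, hm⟩ := hB
      refine ⟨m, fun a ha => ?_⟩
      obtain ⟨b, hb, hba⟩ := hdom a ha
      exact (hm hb).trans hba
    obtain ⟨b₀, hb₀, -⟩ := hdom _ hA.some_mem
    refine le_antisymm (csInf_le_csInf hAbdd ⟨b₀, hb₀⟩ hBA) (le_csInf hA fun a ha => ?_)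
    obtain ⟨b, hb, hba⟩ := hdom a ha
    exact (csInf_le hB hb).trans hba
  · rw [csInf_of_not_bddBelow hB, csInf_of_not_bddBelow fun hA' => hB (hA'.mono hBA)]

theorem exists_mem_forall_norm_sub_sq_add_le {F : Type*} [NormedAddCommGroup F]
    [InnerProductSpace ℝ F] {K : Set F} (hne : K.Nonempty) (hcomplete : IsComplete K)
    (hconv : Convex ℝ K) (x : F) :
    ∃ v ∈ K, ∀ a ∈ K, ‖a - v‖ ^ 2 + ‖x - v‖ ^ 2 ≤ ‖a - x‖ ^ 2 := by
  obtain ⟨v, hv, hmin⟩ := exists_norm_eq_iInf_of_complete_convex hne hcomplete hconv x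
  refine ⟨v, hv, fun a ha => ?_⟩
  have hobtuse : inner ℝ (a - v) (x - v) ≤ 0 := by
    rw [real_inner_comm]
    exact (norm_eq_iInf_iff_real_inner_le_zero hconv hv).mp hmin a ha
  have hexpand := norm_sub_sq_real (a - v) (x - v)
  rw [sub_sub_sub_cancel_right] at hexpand
  linarith

theorem exists_mem_convexHull_forall_norm_sub_sq_add_le {F : Type*} [NormedAddCommGroup F]
    [InnerProductSpace ℝ F] [FiniteDimensional ℝ F] {A : Set F} (hfin : A.Finite)
    (hne : A.Nonempty) (x : F) :
    ∃ v ∈ convexHull ℝ A, ∀ a ∈ A, ‖a - v‖ ^ 2 + ‖x - v‖ ^ 2 ≤ ‖a - x‖ ^ 2 := by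
  obtain ⟨v, hv, hle⟩ := exists_mem_forall_norm_sub_sq_add_le
    (hne.mono (subset_convexHull ℝ A)) (hfin.isCompact_convexHull ℝ).isComplete
    (convex_convexHull ℝ A) x
  exact ⟨v, hv, fun a ha => hle a (subset_convexHull ℝ A ha)⟩

theorem Matrix.PosDef.exists_mem_convexHull_forall_dotProduct_mulVec_le {n ι : Type*}
    [Fintype n] [Finite ι] [Nonempty ι] {M : Matrix n n ℝ} (hM : M.PosDef)
    (θ : ι → n → ℝ) (x : n → ℝ) :
    ∃ v ∈ convexHull ℝ (range θ), ∀ j,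
      (θ j - v) ⬝ᵥ M *ᵥ (θ j - v) ≤ (θ j - x) ⬝ᵥ M *ᵥ (θ j - x) := by
  let := M.toNormedAddCommGroup hM
  let instInner := M.toInnerProductSpace hM.posSemidef
  obtain ⟨v, hv, hle⟩ := exists_mem_convexHull_forall_norm_sub_sq_add_le (finite_range θ)
    (range_nonempty θ) x
  have hquad : ∀ y : n → ℝ, y ⬝ᵥ M *ᵥ y = inner ℝ y y := fun y => dotProduct_comm _ _
  refine ⟨v, hv, fun j => ?_⟩
  -- the instance is explicit since synthesis would pick the sup norm of `n → ℝ`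
  simp only [hquad,
    @real_inner_self_eq_norm_sq _ (M.toSeminormedAddCommGroup hM.posSemidef) instInner]
  exact le_of_add_le_of_nonneg_left (hle _ (mem_range_self j)) (sq_nonneg _)

theorem exists_mixture_neg_log_le_of_forall_exists_le {ι κ E : Type*} [Fintype ι] [Fintype κ]
    {f : ι → E → ℝ} {T : Set E} (hmove : ∀ x, ∃ y ∈ T, ∀ j, f j x ≤ f j y) {c : ℝ} (hc : 0 ≤ c)
    {w : κ → ℝ} (hw : ∀ k, 0 ≤ w k) (t : κ → E) (hpos : ∀ j, 0 < ∑ k, w k * f j (t k)) :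
    ∃ t' : κ → E, (∀ k, t' k ∈ T) ∧ (∀ j, 0 < ∑ k, w k * f j (t' k)) ∧
      -c * ∑ j, Real.log (∑ k, w k * f j (t' k)) ≤ -c * ∑ j, Real.log (∑ k, w k * f j (t k)) := by
  choose t' ht' hle using fun k => hmove (t k)
  have hmix : ∀ j, ∑ k, w k * f j (t k) ≤ ∑ k, w k * f j (t' k) := fun j =>
    Finset.sum_le_sum fun k _ => mul_le_mul_of_nonneg_left (hle k j) (hw k)
  refine ⟨t', ht', fun j => (hpos j).trans_le (hmix j), ?_⟩
  refine mul_le_mul_of_nonpos_left ?_ (neg_nonpos.mpr hc)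
  exact Finset.sum_le_sum fun j _ => Real.log_le_log (hpos j) (hmix j)

theorem stmt16_general (d p : ℕ) (hp : 0 < p) (S : Matrix (Fin d) (Fin d) ℝ) (hS : S.PosDef)
    (θhat : Fin p → (Fin d → ℝ))
    (h : Fin p → ℝ → ℝ)
    (hanti : ∀ j, AntitoneOn (h j) (Set.Ici 0))
    (u : Fin p → ℝ) (hu : ∀ j, 0 ≤ u j)
    (f : Fin p → (Fin d → ℝ) → ℝ)
    (hf : ∀ j θ, f j θ =
      h j (dotProduct (θhat j - θ) ((S⁻¹).mulVec (θhat j - θ))) * u j) :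
    (∀ (q : ℕ) (w : Fin q → ℝ) (t : Fin q → (Fin d → ℝ)),
        (∀ k, 0 ≤ w k) → (∑ k, w k) = 1 →
        (∀ j, 0 < ∑ k, w k * f j (t k)) →
        ∃ ttil : Fin q → (Fin d → ℝ),
          (∀ k, ttil k ∈ convexHull ℝ (Set.range θhat)) ∧
          (∀ j, 0 < ∑ k, w k * f j (ttil k)) ∧
          -(1 / (p : ℝ)) * ∑ j, Real.log (∑ k, w k * f j (ttil k)) ≤
            -(1 / (p : ℝ)) * ∑ j, Real.log (∑ k, w k * f j (t k))) ∧
      sInf (npmleValsPos d p f Set.univ) =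
        sInf (npmleValsPos d p f (convexHull ℝ (Set.range θhat))) := by
  have hmove : ∀ x, ∃ v ∈ convexHull ℝ (range θhat), ∀ j, f j x ≤ f j v := fun x => by
    have : Nonempty (Fin p) := ⟨⟨0, hp⟩⟩
    obtain ⟨v, hv, hquad⟩ := hS.inv.exists_mem_convexHull_forall_dotProduct_mulVec_le θhat x
    refine ⟨v, hv, fun j => ?_⟩
    have hnonneg := hS.inv.posSemidef.dotProduct_mulVec_nonneg
    rw [hf, hf]
    exact mul_le_mul_of_nonneg_right (hanti j (hnonneg _) (hnonneg _) (hquad j)) (hu j)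
  have hshrink := fun q (w : Fin q → ℝ) => exists_mixture_neg_log_le_of_forall_exists_le
    (w := w) hmove (c := 1 / (p : ℝ)) (by positivity)
  refine ⟨fun q w t hw _ hpos => hshrink q w hw t hpos, ?_⟩
  refine csInf_eq_of_subset_of_forall_exists_le ?_ ?_
  · rintro r ⟨m, w, t, hw, hw1, -, hpos, rfl⟩
    exact ⟨m, w, t, hw, hw1, fun _ => mem_univ _, hpos, rfl⟩
  · rintro r ⟨m, w, t, hw, hw1, -, hpos, rfl⟩
    obtain ⟨t', ht', hpos', hle⟩ := hshrink m w hw t hpos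
    exact ⟨_, ⟨m, w, t', hw, hw1, ht', hpos', rfl⟩, hle⟩

/-- Proposition 1 of Feng–Dicker: Suppose
f₀(X_j ∣ θ) = h_j((θ̂_j − θ)ᵀΣ⁻¹(θ̂_j − θ))·u_j with h_j : [0,∞) → [0,∞) antitone,
Σ positive definite and u_j ≥ 0, and let 𝒯₀ = conv(θ̂₁,…,θ̂_p).  Then for every finitely
supported probability measure G (with ℓ(G) finite) there is a finitely supported
probability measure G̃ on 𝒯₀ with ℓ(G̃) ≤ ℓ(G); consequently the infimum of ℓ over all
finitely supported probability measures equals the infimum over those supported on 𝒯₀. -/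
theorem stmt16 (d p : ℕ) (hp : 0 < p) (S : Matrix (Fin d) (Fin d) ℝ) (hS : S.PosDef)
    (θhat : Fin p → (Fin d → ℝ))
    (h : Fin p → ℝ → ℝ)
    (hanti : ∀ j, AntitoneOn (h j) (Set.Ici 0))
    (hnn : ∀ j, ∀ z ∈ Set.Ici (0 : ℝ), 0 ≤ h j z)
    (u : Fin p → ℝ) (hu : ∀ j, 0 ≤ u j)
    (f : Fin p → (Fin d → ℝ) → ℝ)
    (hf : ∀ j θ, f j θ =
      h j (dotProduct (θhat j - θ) ((S⁻¹).mulVec (θhat j - θ))) * u j) :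
    (∀ (q : ℕ) (w : Fin q → ℝ) (t : Fin q → (Fin d → ℝ)),
        (∀ k, 0 ≤ w k) → (∑ k, w k) = 1 →
        (∀ j, 0 < ∑ k, w k * f j (t k)) →
        ∃ ttil : Fin q → (Fin d → ℝ),
          (∀ k, ttil k ∈ convexHull ℝ (Set.range θhat)) ∧
          (∀ j, 0 < ∑ k, w k * f j (ttil k)) ∧
          -(1 / (p : ℝ)) * ∑ j, Real.log (∑ k, w k * f j (ttil k)) ≤
            -(1 / (p : ℝ)) * ∑ j, Real.log (∑ k, w k * f j (t k))) ∧
      sInf (npmleValsPos d p f Set.univ) =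
        sInf (npmleValsPos d p f (convexHull ℝ (Set.range θhat))) :=
  stmt16_general d p hp S hS θhat h hanti u hu f hf
end
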